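/- arXiv:2405.17672 — 3 statements merged into one kernel-verified Lean document; each statement's English description precedes it below -/
import Mathlib

section
/- Let n ≥ 1 and c ≥ 1. Let y : Fin n → (Fin c → ℝ) be labels such that each y_i is a standard basis vector (one-hot vector) of ℝ^c. Let Λ be a finite type of leaves and leaf : Fin n → Λ a surjective assignment of data points to leaves. For each ℓ ∈ Λ let w_ℓ = #{i : leaf i = ℓ} (a positive number by surjectivity), let v_ℓ = (1 / w_ℓ) · ∑_{i : leaf i = ℓ} y_i, and set ŷ_i = v_{leaf i}. Then the weighted Gini impurity (1/n) · ∑_{ℓ} w_ℓ · (1 − ∑_{k} (v_ℓ k)²) equals the mean squared error (1/n) · ∑_{i} ∑_{k} (y_i k − ŷ_i k)². -/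
/-!
One-hot labels are unit vectors, and on each leaf the prediction is the mean `m` of the labels
that fall into it. By the variance decomposition `∑ ‖yᵢ - m‖² = ∑ ‖yᵢ‖² - w ‖m‖²`, the squared
error of a leaf of weight `w` is therefore `w (1 - ‖m‖²)`, its weighted Gini impurity. Empty
leaves contribute zero to both sides.
-/

open Finset

theorem Finset.card_smul_inv_card_smul_sum {ι K M : Type*} [DivisionRing K] [CharZero K]
    [AddCommGroup M] [Module K M] (s : Finset ι) (y : ι → M) :
    (#s : K) • ((#s : K)⁻¹ • ∑ i ∈ s, y i) = ∑ i ∈ s, y i := by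
  rcases s.eq_empty_or_nonempty with rfl | hs
  · simp
  · rw [smul_inv_smul₀ (by exact_mod_cast hs.card_ne_zero)]

section InnerProductSpace

variable {ι E : Type*} [NormedAddCommGroup E] [InnerProductSpace ℝ E]

theorem Finset.sum_norm_sub_mean_sq (s : Finset ι) (y : ι → E) :
    ∑ i ∈ s, ‖y i - (#s : ℝ)⁻¹ • ∑ j ∈ s, y j‖ ^ 2
      = ∑ i ∈ s, ‖y i‖ ^ 2 - #s * ‖(#s : ℝ)⁻¹ • ∑ j ∈ s, y j‖ ^ 2 := by
  set m := (#s : ℝ)⁻¹ • ∑ j ∈ s, y j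
  have hsum : inner ℝ (∑ i ∈ s, y i) m = #s * ‖m‖ ^ 2 := by
    rw [← s.card_smul_inv_card_smul_sum (K := ℝ) y, real_inner_smul_left,
      real_inner_self_eq_norm_sq]
  simp only [norm_sub_sq_real, sum_add_distrib, sum_sub_distrib, ← mul_sum, ← sum_inner, hsum,
    sum_const, nsmul_eq_mul]
  ring

theorem Finset.sum_norm_sub_mean_sq_of_norm_eq_one (s : Finset ι) {y : ι → E}
    (hy : ∀ i ∈ s, ‖y i‖ = 1) :
    ∑ i ∈ s, ‖y i - (#s : ℝ)⁻¹ • ∑ j ∈ s, y j‖ ^ 2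
      = #s * (1 - ‖(#s : ℝ)⁻¹ • ∑ j ∈ s, y j‖ ^ 2) := by
  rw [s.sum_norm_sub_mean_sq, sum_congr rfl fun i hi => by rw [hy i hi, one_pow]]
  simp only [sum_const, nsmul_eq_mul, mul_one, mul_sub]

end InnerProductSpace

section Coordinates

variable {κ : Type*} [Fintype κ]

theorem sum_sq_eq_norm_toLp_sq (x : κ → ℝ) : ∑ k, x k ^ 2 = ‖WithLp.toLp 2 x‖ ^ 2 := by
  simp [EuclideanSpace.norm_sq_eq]

theorem sum_single_one_sq [DecidableEq κ] (k : κ) :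
    ∑ j, (Pi.single k (1 : ℝ) : κ → ℝ) j ^ 2 = 1 := by
  simp [Pi.single_apply, ite_pow]

theorem Finset.sum_sum_sub_mean_sq_of_sum_sq_eq_one {ι : Type*} (s : Finset ι)
    {y : ι → κ → ℝ} (hy : ∀ i ∈ s, ∑ k, y i k ^ 2 = 1) :
    ∑ i ∈ s, ∑ k, (y i k - ((#s : ℝ)⁻¹ • ∑ j ∈ s, y j) k) ^ 2
      = #s * (1 - ∑ k, (((#s : ℝ)⁻¹ • ∑ j ∈ s, y j) k) ^ 2) := by
  have hnorm : ∀ i ∈ s, ‖WithLp.toLp 2 (y i)‖ = 1 := fun i hi =>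
    (pow_eq_one_iff_of_nonneg (norm_nonneg _) two_ne_zero).1
      (by rw [← sum_sq_eq_norm_toLp_sq, hy i hi])
  simp only [← Pi.sub_apply, sum_sq_eq_norm_toLp_sq, WithLp.toLp_sub, WithLp.toLp_smul,
    WithLp.toLp_sum]
  exact s.sum_norm_sub_mean_sq_of_norm_eq_one hnorm

end Coordinates

open Finset in
theorem gini_eq_mse_general
    (n c : ℕ)
    (y : Fin n → Fin c → ℝ) (hy : ∀ i, ∃ k : Fin c, y i = Pi.single k 1)
    (Λ : Type) [Fintype Λ] [DecidableEq Λ] (leaf : Fin n → Λ)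
    (w : Λ → ℝ)
    (hw : ∀ ℓ, w ℓ = ((Finset.univ.filter (fun i => leaf i = ℓ)).card : ℝ))
    (v : Λ → Fin c → ℝ)
    (hv : ∀ ℓ, v ℓ = (1 / w ℓ) • ∑ i ∈ Finset.univ.filter (fun i => leaf i = ℓ), y i)
    (yhat : Fin n → Fin c → ℝ) (hyhat : ∀ i, yhat i = v (leaf i)) :
    (1 / (n : ℝ)) * ∑ ℓ, w ℓ * (1 - ∑ k, (v ℓ k) ^ 2)
      = (1 / (n : ℝ)) * ∑ i, ∑ k, (y i k - yhat i k) ^ 2 := by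
  have hy_sq : ∀ i, ∑ k, y i k ^ 2 = 1 := fun i => by
    obtain ⟨k, hk⟩ := hy i
    rw [hk, sum_single_one_sq]
  congr 1
  rw [← sum_fiberwise univ leaf]
  refine sum_congr rfl fun ℓ _ => ?_
  have hv_mean : v ℓ = (#{i | leaf i = ℓ} : ℝ)⁻¹ • ∑ i with leaf i = ℓ, y i := by
    rw [hv, hw, one_div]
  calc w ℓ * (1 - ∑ k, v ℓ k ^ 2)
      = ∑ i with leaf i = ℓ, ∑ k, (y i k - v ℓ k) ^ 2 := by
        rw [hw, hv_mean, sum_sum_sub_mean_sq_of_sum_sq_eq_one _ fun i _ => hy_sq i]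
    _ = ∑ i with leaf i = ℓ, ∑ k, (y i k - yhat i k) ^ 2 :=
        sum_congr rfl fun i hi => by rw [hyhat, (mem_filter.1 hi).2]

open Finset in
/-- For one-hot labels, the weighted Gini impurity of a tree partition equals the
mean squared error of the tree predictions. -/
theorem gini_eq_mse
    (n c : ℕ) (hn : 1 ≤ n) (hc : 1 ≤ c)
    (y : Fin n → Fin c → ℝ) (hy : ∀ i, ∃ k : Fin c, y i = Pi.single k 1)
    (Λ : Type) [Fintype Λ] [DecidableEq Λ] (leaf : Fin n → Λ) (hleaf : Function.Surjective leaf)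
    (w : Λ → ℝ)
    (hw : ∀ ℓ, w ℓ = ((Finset.univ.filter (fun i => leaf i = ℓ)).card : ℝ))
    (v : Λ → Fin c → ℝ)
    (hv : ∀ ℓ, v ℓ = (1 / w ℓ) • ∑ i ∈ Finset.univ.filter (fun i => leaf i = ℓ), y i)
    (yhat : Fin n → Fin c → ℝ) (hyhat : ∀ i, yhat i = v (leaf i)) :
    (1 / (n : ℝ)) * ∑ ℓ, w ℓ * (1 - ∑ k, (v ℓ k) ^ 2)
      = (1 / (n : ℝ)) * ∑ i, ∑ k, (y i k - yhat i k) ^ 2 :=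
  gini_eq_mse_general n c y hy Λ leaf w hw v hv yhat hyhat
end

section
/- Let n ≥ 1 and c ≥ 1. Let y : Fin n → (Fin c → ℝ) be labels such that each y_i is a standard basis vector (one-hot vector) of ℝ^c. Let Λ be a finite type of leaves and leaf : Fin n → Λ a surjective assignment of data points to leaves. For each ℓ ∈ Λ let w_ℓ = #{i : leaf i = ℓ}, let v_ℓ = (1 / w_ℓ) · ∑_{i : leaf i = ℓ} y_i, and set ŷ_i = v_{leaf i}. Then the weighted entropy impurity (1/n) · ∑_{ℓ} w_ℓ · ∑_{k} (v_ℓ k) · Real.log (v_ℓ k) equals (1/n) · ∑_{i} ∑_{k} (y_i k) · Real.log (ŷ_i k), i.e., minus the cross-entropy loss of the tree predictions (using Real.log, with the convention log 0 = 0; note that whenever y_i k = 1 the corresponding entry ŷ_i k is strictly positive). -/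
open Finset in
/-- For one-hot labels, the weighted entropy impurity of a tree partition equals minus
the cross-entropy loss of the tree predictions (with the convention `Real.log 0 = 0`). -/
theorem entropy_eq_neg_cross_entropy
    (n c : ℕ) (hn : 1 ≤ n) (hc : 1 ≤ c)
    (y : Fin n → Fin c → ℝ) (hy : ∀ i, ∃ k : Fin c, y i = Pi.single k 1)
    (Λ : Type) [Fintype Λ] [DecidableEq Λ] (leaf : Fin n → Λ) (hleaf : Function.Surjective leaf)
    (w : Λ → ℝ)
    (hw : ∀ ℓ, w ℓ = ((Finset.univ.filter (fun i => leaf i = ℓ)).card : ℝ))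
    (v : Λ → Fin c → ℝ)
    (hv : ∀ ℓ, v ℓ = (1 / w ℓ) • ∑ i ∈ Finset.univ.filter (fun i => leaf i = ℓ), y i)
    (yhat : Fin n → Fin c → ℝ) (hyhat : ∀ i, yhat i = v (leaf i)) :
    (1 / (n : ℝ)) * ∑ ℓ, w ℓ * ∑ k, (v ℓ k) * Real.log (v ℓ k)
      = (1 / (n : ℝ)) * ∑ i, ∑ k, (y i k) * Real.log (yhat i k) := by
  congr 1
  rw [← Finset.sum_fiberwise Finset.univ leaf
    (fun i => ∑ k, (y i k) * Real.log (yhat i k))]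
  refine Finset.sum_congr rfl (fun ℓ _ => ?_)
  have hne : (Finset.univ.filter (fun i => leaf i = ℓ)).Nonempty := by
    obtain ⟨i, hi⟩ := hleaf ℓ
    exact ⟨i, by simp [hi]⟩
  have hw0 : w ℓ ≠ 0 := by
    rw [hw]
    exact Nat.cast_ne_zero.mpr (Finset.card_pos.mpr hne).ne'
  have hkey : ∀ k, w ℓ * v ℓ k =
      ∑ i ∈ Finset.univ.filter (fun i => leaf i = ℓ), y i k := by
    intro k
    rw [hv]
    simp only [Pi.smul_apply, Finset.sum_apply, smul_eq_mul, one_div]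
    field_simp
  calc w ℓ * ∑ k, v ℓ k * Real.log (v ℓ k)
      = ∑ k, (w ℓ * v ℓ k) * Real.log (v ℓ k) := by
        rw [Finset.mul_sum]; exact Finset.sum_congr rfl fun k _ => by ring
    _ = ∑ k, (∑ i ∈ Finset.univ.filter (fun i => leaf i = ℓ), y i k)
          * Real.log (v ℓ k) := by
        exact Finset.sum_congr rfl fun k _ => by rw [hkey k]
    _ = ∑ i ∈ Finset.univ.filter (fun i => leaf i = ℓ),
          ∑ k, y i k * Real.log (v ℓ k) := by
        rw [Finset.sum_comm]
        exact Finset.sum_congr rfl fun i _ => by rw [← Finset.sum_mul]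
    _ = ∑ i ∈ Finset.univ.filter (fun i => leaf i = ℓ),
          ∑ k, y i k * Real.log (yhat i k) := by
        refine Finset.sum_congr rfl fun i hi => ?_
        have : leaf i = ℓ := by simpa using hi
        rw [hyhat, this]
end

section
/- Let c ≥ 1, let C ∈ ℝ, and let L : Fin c → (Fin c → ℝ) → ℝ be nonnegative with ∑_k L k v = C for all v ∈ ℝ^c. Let w : Fin c → ℝ be nonnegative class weights and let k₁ ∈ Fin c satisfy w k₁ ≥ w k for all k. Then ∑_k w_k · L k (e_{k₁}) ≤ w_{k₁} · C, where e_{k₁} is the k₁-th standard basis vector. Combined with the lower bound ∑_k w_k · L k v ≥ w_{k₁} · C for all v, this shows the weighted loss at the plurality indicator is minimal. -/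
/-- Upper bound: for a nonnegative symmetric loss, the weighted leaf loss at the
plurality indicator is at most `w k₁ * C`. -/
theorem symmetric_loss_upper_bound_at_plurality
    (c : ℕ) (hc : 1 ≤ c) (C : ℝ)
    (L : Fin c → (Fin c → ℝ) → ℝ)
    (hL0 : ∀ k v, 0 ≤ L k v)
    (hLsym : ∀ v : Fin c → ℝ, ∑ k, L k v = C)
    (w : Fin c → ℝ) (hw : ∀ k, 0 ≤ w k)
    (k₁ : Fin c) (hk₁ : ∀ k, w k ≤ w k₁) :
    ∑ k, w k * L k (Pi.single k₁ 1) ≤ w k₁ * C := by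
  calc ∑ k, w k * L k (Pi.single k₁ 1)
      ≤ ∑ k, w k₁ * L k (Pi.single k₁ 1) := by
        exact Finset.sum_le_sum fun k _ => mul_le_mul_of_nonneg_right (hk₁ k) (hL0 k _)
    _ = w k₁ * C := by rw [← Finset.mul_sum, hLsym]
end
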